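/- Let Λ = {(W_j, Λ_j, v_j)} be a g-fusion frame for H with bounds A, B and Γ = {(V_j, Γ_j, v_j)} be a g-fusion frame for X with bounds C, D. Then Λ⊕Γ = {(W_j ⊕ V_j, Λ_j ⊕ Γ_j, v_j)}_{j∈J} is a g-fusion frame for the direct sum H ⊕ X with bounds min{A,C} and max{B,D}. -/

import Mathlib

/-!
Both the squared ℓ²-norm on H ⊕ X and every term of the frame sum of Λ ⊕ Γ split into an
H-part plus an X-part, so the two frame inequalities simply add, each side with the weaker of
the two constants.
-/

open ContinuousLinearMap

noncomputable def proj {E : Type*} [NormedAddCommGroup E] [InnerProductSpace ℂ E]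
    (W : Submodule ℂ E) [CompleteSpace W] : E →L[ℂ] E :=
  W.subtypeL.comp (Submodule.orthogonalProjection W)

/-- The operator U ⊕ V acting between ℓ²-direct sums of two Hilbert spaces. -/
noncomputable def oplus {E F E' F' : Type*} [NormedAddCommGroup E] [NormedSpace ℂ E]
    [NormedAddCommGroup F] [NormedSpace ℂ F] [NormedAddCommGroup E'] [NormedSpace ℂ E']
    [NormedAddCommGroup F'] [NormedSpace ℂ F']
    (A : E →L[ℂ] E') (B : F →L[ℂ] F') : WithLp 2 (E × F) →L[ℂ] WithLp 2 (E' × F') :=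
  ((WithLp.prodContinuousLinearEquiv 2 ℂ E' F').symm.toContinuousLinearMap).comp
    ((A.prodMap B).comp (WithLp.prodContinuousLinearEquiv 2 ℂ E F).toContinuousLinearMap)

section Oplus

variable {E F E' F' E'' F'' : Type*} [NormedAddCommGroup E] [NormedSpace ℂ E]
  [NormedAddCommGroup F] [NormedSpace ℂ F] [NormedAddCommGroup E'] [NormedSpace ℂ E']
  [NormedAddCommGroup F'] [NormedSpace ℂ F'] [NormedAddCommGroup E''] [NormedSpace ℂ E'']
  [NormedAddCommGroup F''] [NormedSpace ℂ F'']

@[simp]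
lemma oplus_apply_fst (A : E →L[ℂ] E') (B : F →L[ℂ] F') (u : WithLp 2 (E × F)) :
    (oplus A B u).fst = A u.fst :=
  rfl

@[simp]
lemma oplus_apply_snd (A : E →L[ℂ] E') (B : F →L[ℂ] F') (u : WithLp 2 (E × F)) :
    (oplus A B u).snd = B u.snd :=
  rfl

lemma norm_oplus_apply_sq (A : E →L[ℂ] E') (B : F →L[ℂ] F') (u : WithLp 2 (E × F)) :
    ‖oplus A B u‖ ^ 2 = ‖A u.fst‖ ^ 2 + ‖B u.snd‖ ^ 2 := by
  rw [WithLp.prod_norm_sq_eq_of_L2, oplus_apply_fst, oplus_apply_snd]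

lemma norm_oplus_oplus_apply_sq (A : E' →L[ℂ] E'') (B : F' →L[ℂ] F'')
    (P : E →L[ℂ] E') (Q : F →L[ℂ] F') (u : WithLp 2 (E × F)) :
    ‖oplus A B (oplus P Q u)‖ ^ 2 = ‖A (P u.fst)‖ ^ 2 + ‖B (Q u.snd)‖ ^ 2 := by
  rw [norm_oplus_apply_sq, oplus_apply_fst, oplus_apply_snd]

end Oplus

lemma min_mul_add_le_add_mul {A C x y : ℝ} (hx : 0 ≤ x) (hy : 0 ≤ y) :
    min A C * (x + y) ≤ A * x + C * y := by
  rw [mul_add]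
  gcongr
  exacts [min_le_left A C, min_le_right A C]

lemma add_mul_le_max_mul_add {B D x y : ℝ} (hx : 0 ≤ x) (hy : 0 ≤ y) :
    B * x + D * y ≤ max B D * (x + y) := by
  rw [mul_add]
  gcongr
  exacts [le_max_left B D, le_max_right B D]

lemma summable_add_and_tsum_add_bounds {ι : Type*} {a b : ι → ℝ} {A B C D x y : ℝ}
    (hx : 0 ≤ x) (hy : 0 ≤ y)
    (ha : Summable a ∧ A * x ≤ ∑' j, a j ∧ ∑' j, a j ≤ B * x)
    (hb : Summable b ∧ C * y ≤ ∑' j, b j ∧ ∑' j, b j ≤ D * y) :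
    Summable (fun j => a j + b j) ∧ min A C * (x + y) ≤ ∑' j, (a j + b j) ∧
      ∑' j, (a j + b j) ≤ max B D * (x + y) := by
  obtain ⟨ha, hAa, haB⟩ := ha
  obtain ⟨hb, hCb, hbD⟩ := hb
  rw [ha.tsum_add hb]
  refine ⟨ha.add hb, ?_, ?_⟩
  · linarith [min_mul_add_le_add_mul (A := A) (C := C) hx hy]
  · linarith [add_mul_le_max_mul_add (B := B) (D := D) hx hy]

theorem stmt14_general {ι E F : Type*} [NormedAddCommGroup E] [InnerProductSpace ℂ E]
    [NormedAddCommGroup F] [InnerProductSpace ℂ F]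
    {G X : ι → Type*} [∀ j, NormedAddCommGroup (G j)] [∀ j, InnerProductSpace ℂ (G j)]
    [∀ j, NormedAddCommGroup (X j)] [∀ j, InnerProductSpace ℂ (X j)]
    (W : ι → Submodule ℂ E) [∀ j, CompleteSpace (W j)]
    (Vs : ι → Submodule ℂ F) [∀ j, CompleteSpace (Vs j)]
    (v : ι → ℝ)
    (Λ : ∀ j, E →L[ℂ] G j) (Γ : ∀ j, F →L[ℂ] X j)
    (A B C D : ℝ)
    (hΛ : ∀ f : E, Summable (fun j => (v j) ^ 2 * ‖Λ j (proj (W j) f)‖ ^ 2) ∧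
      A * ‖f‖ ^ 2 ≤ ∑' j, (v j) ^ 2 * ‖Λ j (proj (W j) f)‖ ^ 2 ∧
      ∑' j, (v j) ^ 2 * ‖Λ j (proj (W j) f)‖ ^ 2 ≤ B * ‖f‖ ^ 2)
    (hΓ : ∀ g : F, Summable (fun j => (v j) ^ 2 * ‖Γ j (proj (Vs j) g)‖ ^ 2) ∧
      C * ‖g‖ ^ 2 ≤ ∑' j, (v j) ^ 2 * ‖Γ j (proj (Vs j) g)‖ ^ 2 ∧
      ∑' j, (v j) ^ 2 * ‖Γ j (proj (Vs j) g)‖ ^ 2 ≤ D * ‖g‖ ^ 2) :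
    ∀ u : WithLp 2 (E × F),
      Summable (fun j => (v j) ^ 2 *
        ‖oplus (Λ j) (Γ j) (oplus (proj (W j)) (proj (Vs j)) u)‖ ^ 2) ∧
      min A C * ‖u‖ ^ 2 ≤
        ∑' j, (v j) ^ 2 * ‖oplus (Λ j) (Γ j) (oplus (proj (W j)) (proj (Vs j)) u)‖ ^ 2 ∧
      ∑' j, (v j) ^ 2 * ‖oplus (Λ j) (Γ j) (oplus (proj (W j)) (proj (Vs j)) u)‖ ^ 2 ≤
        max B D * ‖u‖ ^ 2 := by
  intro u
  simp_rw [norm_oplus_oplus_apply_sq, mul_add, WithLp.prod_norm_sq_eq_of_L2 u]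
  exact summable_add_and_tsum_add_bounds (sq_nonneg _) (sq_nonneg _) (hΛ u.fst) (hΓ u.snd)

/-- if Λ is a g-fusion frame for H with bounds A, B and Γ is a g-fusion frame
for X with bounds C, D, then Λ⊕Γ is a g-fusion frame for H ⊕ X with bounds min{A,C},
max{B,D}. -/
theorem stmt14 {ι E F : Type*} [NormedAddCommGroup E] [InnerProductSpace ℂ E] [CompleteSpace E]
    [NormedAddCommGroup F] [InnerProductSpace ℂ F] [CompleteSpace F]
    {G X : ι → Type*} [∀ j, NormedAddCommGroup (G j)] [∀ j, InnerProductSpace ℂ (G j)]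
    [∀ j, CompleteSpace (G j)] [∀ j, NormedAddCommGroup (X j)] [∀ j, InnerProductSpace ℂ (X j)]
    [∀ j, CompleteSpace (X j)]
    (W : ι → Submodule ℂ E) [∀ j, CompleteSpace (W j)]
    (Vs : ι → Submodule ℂ F) [∀ j, CompleteSpace (Vs j)]
    (v : ι → ℝ) (hv : ∀ j, 0 < v j)
    (Λ : ∀ j, E →L[ℂ] G j) (Γ : ∀ j, F →L[ℂ] X j)
    (A B C D : ℝ) (hA : 0 < A) (hC : 0 < C)
    (hΛ : ∀ f : E, Summable (fun j => (v j) ^ 2 * ‖Λ j (proj (W j) f)‖ ^ 2) ∧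
      A * ‖f‖ ^ 2 ≤ ∑' j, (v j) ^ 2 * ‖Λ j (proj (W j) f)‖ ^ 2 ∧
      ∑' j, (v j) ^ 2 * ‖Λ j (proj (W j) f)‖ ^ 2 ≤ B * ‖f‖ ^ 2)
    (hΓ : ∀ g : F, Summable (fun j => (v j) ^ 2 * ‖Γ j (proj (Vs j) g)‖ ^ 2) ∧
      C * ‖g‖ ^ 2 ≤ ∑' j, (v j) ^ 2 * ‖Γ j (proj (Vs j) g)‖ ^ 2 ∧
      ∑' j, (v j) ^ 2 * ‖Γ j (proj (Vs j) g)‖ ^ 2 ≤ D * ‖g‖ ^ 2) :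
    ∀ u : WithLp 2 (E × F),
      Summable (fun j => (v j) ^ 2 *
        ‖oplus (Λ j) (Γ j) (oplus (proj (W j)) (proj (Vs j)) u)‖ ^ 2) ∧
      min A C * ‖u‖ ^ 2 ≤
        ∑' j, (v j) ^ 2 * ‖oplus (Λ j) (Γ j) (oplus (proj (W j)) (proj (Vs j)) u)‖ ^ 2 ∧
      ∑' j, (v j) ^ 2 * ‖oplus (Λ j) (Γ j) (oplus (proj (W j)) (proj (Vs j)) u)‖ ^ 2 ≤
        max B D * ‖u‖ ^ 2 :=
  stmt14_general W Vs v Λ Γ A B C D hΛ hΓ
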